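/- Let r: R^d → R be L-Lipschitz and let x_1,...,x_K, x'_1,...,x'_K ∈ R^d with ‖x_i‖, ‖x'_i‖ ≤ B. Define weights p_i = e^{r(x_i)}/Σ_j e^{r(x_j)} and p'_i analogously for the x'_i. Then ‖Σ_i p_i x_i − Σ_i p'_i x'_i‖ ≤ Σ_i p_i ‖x_i − x'_i‖ + (LB/2) Σ_i ‖x_i − x'_i‖, which is at most (1 + LB/2) Σ_i ‖x_i − x'_i‖. -/

import Mathlib

/-!
Write `Σ pᵢ xᵢ - Σ p'ᵢ x'ᵢ = Σ pᵢ (xᵢ - x'ᵢ) + Σ (pᵢ - p'ᵢ) x'ᵢ`; the second sum is at most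
`B ‖p - p'‖₁`, so everything reduces to the softmax map being `1/2`-Lipschitz in `ℓ¹`.
Along the segment from `v` to `w` the softmax `σ` has derivative `σᵢ (hᵢ - ⟨σ, h⟩)` with
`h = w - v`, and for any probability vector `p` one has
`Σ pᵢ |hᵢ - ⟨p, h⟩| ≤ Σ 2 pᵢ (1 - pᵢ) |hᵢ| ≤ ‖h‖₁ / 2`; the mean value inequality, applied
to `t ↦ Σ sign(σᵢ(w) - σᵢ(v)) σᵢ(v + t h)`, turns this into `‖σ(w) - σ(v)‖₁ ≤ ‖w - v‖₁ / 2`.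
-/

open Finset Real

section WeightedMean

variable {ι : Type*} [Fintype ι] {p : ι → ℝ}

lemma abs_sub_sum_mul_le [DecidableEq ι] (hp : ∀ j, 0 ≤ p j) (hp1 : ∑ j, p j = 1)
    (h : ι → ℝ) (i : ι) :
    |h i - ∑ j, p j * h j| ≤ (1 - 2 * p i) * |h i| + ∑ j, p j * |h j| := by
  have hpi : p i ≤ 1 := hp1 ▸ single_le_sum (fun j _ => hp j) (mem_univ i)
  have hsplit := add_sum_erase univ (fun j => p j * h j) (mem_univ i)
  have hsplit_abs := add_sum_erase univ (fun j => p j * |h j|) (mem_univ i)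
  have herase : |∑ j ∈ univ.erase i, p j * h j| ≤ ∑ j ∈ univ.erase i, p j * |h j| :=
    (abs_sum_le_sum_abs _ _).trans_eq
      (sum_congr rfl fun j _ => by rw [abs_mul, abs_of_nonneg (hp j)])
  calc |h i - ∑ j, p j * h j|
      = |(1 - p i) * h i - ∑ j ∈ univ.erase i, p j * h j| := by rw [← hsplit]; ring_nf
    _ ≤ |(1 - p i) * h i| + |∑ j ∈ univ.erase i, p j * h j| := abs_sub _ _
    _ ≤ (1 - 2 * p i) * |h i| + ∑ j, p j * |h j| := by
      rw [abs_mul, abs_of_nonneg (sub_nonneg.2 hpi), ← hsplit_abs]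
      linarith

lemma sum_mul_abs_sub_sum_mul_le (hp : ∀ j, 0 ≤ p j) (hp1 : ∑ j, p j = 1) (h : ι → ℝ) :
    ∑ i, p i * |h i - ∑ j, p j * h j| ≤ (∑ i, |h i|) / 2 := by
  classical
  calc ∑ i, p i * |h i - ∑ j, p j * h j|
      ≤ ∑ i, p i * ((1 - 2 * p i) * |h i| + ∑ j, p j * |h j|) :=
        sum_le_sum fun i _ => mul_le_mul_of_nonneg_left (abs_sub_sum_mul_le hp hp1 h i) (hp i)
    _ = ∑ i, p i * ((1 - 2 * p i) * |h i|) + (∑ i, p i) * ∑ j, p j * |h j| := by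
      simp only [mul_add, sum_add_distrib, sum_mul]
    _ = ∑ i, 2 * (p i * (1 - p i)) * |h i| := by
      rw [hp1, one_mul, ← sum_add_distrib]
      exact sum_congr rfl fun i _ => by ring
    _ ≤ ∑ i, |h i| / 2 :=
      sum_le_sum fun i _ => by nlinarith [sq_nonneg (2 * p i - 1), abs_nonneg (h i)]
    _ = (∑ i, |h i|) / 2 := (sum_div _ _ _).symm

end WeightedMean

noncomputable def softmax {ι : Type*} [Fintype ι] (w : ι → ℝ) (i : ι) : ℝ :=
  exp (w i) / ∑ j, exp (w j)

section Softmax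

variable {ι : Type*} [Fintype ι]

lemma sum_exp_pos [Nonempty ι] (w : ι → ℝ) : 0 < ∑ j, exp (w j) :=
  sum_pos (fun j _ => exp_pos (w j)) univ_nonempty

lemma softmax_nonneg (w : ι → ℝ) (i : ι) : 0 ≤ softmax w i := by
  unfold softmax; positivity

lemma sum_softmax [Nonempty ι] (w : ι → ℝ) : ∑ i, softmax w i = 1 := by
  simp only [softmax, ← sum_div]
  exact div_self (sum_exp_pos w).ne'

lemma softmax_le_one (w : ι → ℝ) (i : ι) : softmax w i ≤ 1 := by
  have : Nonempty ι := ⟨i⟩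
  rw [← sum_softmax w]
  exact single_le_sum (fun j _ => softmax_nonneg w j) (mem_univ i)

lemma hasDerivAt_softmax {w : ℝ → ι → ℝ} {w' : ι → ℝ} {t : ℝ}
    (hw : ∀ j, HasDerivAt (fun s => w s j) (w' j) t) (i : ι) :
    HasDerivAt (fun s => softmax (w s) i)
      (softmax (w t) i * (w' i - ∑ j, softmax (w t) j * w' j)) t := by
  have : Nonempty ι := ⟨i⟩
  have hS := (sum_exp_pos (w t)).ne'
  have hnum := (hw i).exp
  have hden := HasDerivAt.fun_sum fun j (_ : j ∈ univ) => (hw j).exp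
  refine (hnum.div hden hS).congr_deriv ?_
  have hmean : ∑ j, softmax (w t) j * w' j = (∑ j, exp (w t j) * w' j) / ∑ j, exp (w t j) := by
    simp only [softmax, div_mul_eq_mul_div, sum_div]
  rw [hmean, softmax]
  field_simp

lemma abs_sum_mul_softmax_mul_sub_le {s : ι → ℝ} (hs : ∀ i, |s i| ≤ 1) (w h : ι → ℝ) :
    |∑ i, s i * (softmax w i * (h i - ∑ j, softmax w j * h j))| ≤ (∑ i, |h i|) / 2 := by
  cases isEmpty_or_nonempty ι
  · simp
  calc |∑ i, s i * (softmax w i * (h i - ∑ j, softmax w j * h j))|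
      ≤ ∑ i, softmax w i * |h i - ∑ j, softmax w j * h j| := by
        refine (abs_sum_le_sum_abs _ _).trans (sum_le_sum fun i _ => ?_)
        rw [abs_mul, abs_mul, abs_of_nonneg (softmax_nonneg w i)]
        exact mul_le_of_le_one_left (mul_nonneg (softmax_nonneg w i) (abs_nonneg _)) (hs i)
    _ ≤ (∑ i, |h i|) / 2 := sum_mul_abs_sub_sum_mul_le (softmax_nonneg w) (sum_softmax w) h

theorem sum_abs_softmax_sub_softmax_le (w v : ι → ℝ) :
    ∑ i, |softmax w i - softmax v i| ≤ (∑ i, |w i - v i|) / 2 := by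
  set s : ι → ℝ := fun i => SignType.sign (softmax w i - softmax v i)
  have hs : ∀ i, |s i| ≤ 1 := fun i => by
    cases h : SignType.sign (softmax w i - softmax v i) <;> simp [s, h]
  set a : ℝ → ι → ℝ := fun t j => v j + t * (w j - v j)
  have ha : ∀ t j, HasDerivAt (fun t => a t j) (w j - v j) t := fun t j => by
    show HasDerivAt (fun t => v j + t * (w j - v j)) _ t
    simpa using ((hasDerivAt_id t).mul_const (w j - v j)).const_add (v j)
  have hmvt := norm_image_sub_le_of_norm_deriv_le_segment_01'
    (f := fun t => ∑ i, s i * softmax (a t) i)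
    (fun t _ => (HasDerivAt.fun_sum fun i _ =>
      (hasDerivAt_softmax (ha t) i).const_mul (s i)).hasDerivWithinAt)
    (fun t _ => abs_sum_mul_softmax_mul_sub_le hs (a t) (fun j => w j - v j))
  have ha0 : a 0 = v := by simp [a]
  have ha1 : a 1 = w := by simp [a]
  calc ∑ i, |softmax w i - softmax v i|
      = ∑ i, s i * softmax (a 1) i - ∑ i, s i * softmax (a 0) i := by
        simp only [ha0, ha1, ← sum_sub_distrib, ← mul_sub, s, sign_mul_self]
    _ ≤ (∑ i, |w i - v i|) / 2 := (le_abs_self _).trans hmvt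

end Softmax

lemma norm_sum_smul_sub_sum_smul_le {ι E : Type*} [Fintype ι] [SeminormedAddCommGroup E]
    [NormedSpace ℝ E] {p q : ι → ℝ} {x y : ι → E} {B : ℝ} (hp : ∀ i, 0 ≤ p i)
    (hy : ∀ i, ‖y i‖ ≤ B) :
    ‖∑ i, p i • x i - ∑ i, q i • y i‖ ≤ ∑ i, p i * ‖x i - y i‖ + B * ∑ i, |p i - q i| := by
  have hdecomp : ∑ i, p i • x i - ∑ i, q i • y i
      = ∑ i, p i • (x i - y i) + ∑ i, (p i - q i) • y i := by
    simp only [smul_sub, sub_smul, sum_sub_distrib]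
    abel
  rw [hdecomp, mul_sum]
  refine (norm_add_le _ _).trans (add_le_add ?_ ?_) <;>
    refine (norm_sum_le _ _).trans (sum_le_sum fun i _ => ?_) <;>
    rw [norm_smul, Real.norm_eq_abs]
  · rw [abs_of_nonneg (hp i)]
  · rw [mul_comm B]
    exact mul_le_mul_of_nonneg_left (hy i) (abs_nonneg _)

theorem bt_weighted_average_bound_general
    {K d : ℕ} (r : EuclideanSpace ℝ (Fin d) → ℝ) (L B : ℝ)
    (hB : 0 ≤ B)
    (hr : ∀ u v, |r u - r v| ≤ L * ‖u - v‖)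
    (x x' : Fin K → EuclideanSpace ℝ (Fin d))
    (hx' : ∀ i, ‖x' i‖ ≤ B)
    (p p' : Fin K → ℝ)
    (hp : ∀ i, p i = Real.exp (r (x i)) / ∑ j, Real.exp (r (x j)))
    (hp' : ∀ i, p' i = Real.exp (r (x' i)) / ∑ j, Real.exp (r (x' j))) :
    ‖(∑ i, p i • x i) - ∑ i, p' i • x' i‖ ≤
        (∑ i, p i * ‖x i - x' i‖) + (L * B / 2) * ∑ i, ‖x i - x' i‖ ∧
      (∑ i, p i * ‖x i - x' i‖) + (L * B / 2) * ∑ i, ‖x i - x' i‖ ≤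
        (1 + L * B / 2) * ∑ i, ‖x i - x' i‖ := by
  have hp_eq : p = softmax (fun i => r (x i)) := funext hp
  have hp'_eq : p' = softmax (fun i => r (x' i)) := funext hp'
  have hweights : ∑ i, |p i - p' i| ≤ L / 2 * ∑ i, ‖x i - x' i‖ :=
    calc ∑ i, |p i - p' i| ≤ (∑ i, |r (x i) - r (x' i)|) / 2 := by
          rw [hp_eq, hp'_eq]; exact sum_abs_softmax_sub_softmax_le _ _
      _ ≤ (∑ i, L * ‖x i - x' i‖) / 2 := by gcongr with i; exact hr _ _
      _ = L / 2 * ∑ i, ‖x i - x' i‖ := by rw [← mul_sum]; ring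
  constructor
  · calc ‖∑ i, p i • x i - ∑ i, p' i • x' i‖
        ≤ ∑ i, p i * ‖x i - x' i‖ + B * ∑ i, |p i - p' i| :=
          norm_sum_smul_sub_sum_smul_le (hp_eq ▸ softmax_nonneg _) hx'
      _ ≤ ∑ i, p i * ‖x i - x' i‖ + L * B / 2 * ∑ i, ‖x i - x' i‖ := by
          linarith [mul_le_mul_of_nonneg_left hweights hB]
  · have : ∑ i, p i * ‖x i - x' i‖ ≤ ∑ i, ‖x i - x' i‖ :=
      sum_le_sum fun i _ => mul_le_of_le_one_left (norm_nonneg _) (hp_eq ▸ softmax_le_one _ i)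
    linarith

/-- Bound on the difference of Bradley–Terry (softmax-of-reward) weighted
averages of bounded points under an `L`-Lipschitz reward. -/
theorem bt_weighted_average_bound
    {K d : ℕ} (r : EuclideanSpace ℝ (Fin d) → ℝ) (L B : ℝ)
    (hL : 0 ≤ L) (hB : 0 ≤ B)
    (hr : ∀ u v, |r u - r v| ≤ L * ‖u - v‖)
    (x x' : Fin K → EuclideanSpace ℝ (Fin d))
    (hx : ∀ i, ‖x i‖ ≤ B) (hx' : ∀ i, ‖x' i‖ ≤ B)
    (p p' : Fin K → ℝ)
    (hp : ∀ i, p i = Real.exp (r (x i)) / ∑ j, Real.exp (r (x j)))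
    (hp' : ∀ i, p' i = Real.exp (r (x' i)) / ∑ j, Real.exp (r (x' j))) :
    ‖(∑ i, p i • x i) - ∑ i, p' i • x' i‖ ≤
        (∑ i, p i * ‖x i - x' i‖) + (L * B / 2) * ∑ i, ‖x i - x' i‖ ∧
      (∑ i, p i * ‖x i - x' i‖) + (L * B / 2) * ∑ i, ‖x i - x' i‖ ≤
        (1 + L * B / 2) * ∑ i, ‖x i - x' i‖ :=
  bt_weighted_average_bound_general r L B hB hr x x' hx' p p' hp hp'
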